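/- Let φ : 𝔻 → 𝔻 be holomorphic with φ ∉ Aut(𝔻). Then for all z, w ∈ 𝔻, the hyperbolic distance between the hyperbolic distortions satisfies k(D_h φ(z), D_h φ(w)) ≤ 2 k(z,w), where D_h φ(z), D_h φ(w) ∈ [0,1) are regarded as points of 𝔻. -/

import Mathlib

open Metric Set

noncomputable def Dh (φ : ℂ → ℂ) (z : ℂ) : ℝ :=
  (1 - ‖z‖ ^ 2) * ‖deriv φ z‖ / (1 - ‖φ z‖ ^ 2)

noncomputable def pdist (z w : ℂ) : ℝ :=
  ‖(z - w) / (1 - (starRingEnd ℂ) w * z)‖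

noncomputable def hdist (z w : ℂ) : ℝ :=
  Real.log ((1 + pdist z w) / (1 - pdist z w))

/-- `φ` is a conformal automorphism of the unit disk. -/
def IsDiskAut (φ : ℂ → ℂ) : Prop :=
  ∃ ψ : ℂ → ℂ, DifferentiableOn ℂ ψ (ball (0:ℂ) 1) ∧
    MapsTo ψ (ball (0:ℂ) 1) (ball (0:ℂ) 1) ∧
    (∀ z ∈ ball (0:ℂ) 1, ψ (φ z) = z) ∧
    (∀ z ∈ ball (0:ℂ) 1, φ (ψ z) = z)

/-! Fix `a` in the disk and put `h = T_{φ a} ∘ φ ∘ T_{-a}` with `T_c ζ = (ζ - c) / (1 - c̄ ζ)`,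
so that `h 0 = 0`. The difference quotient `F = dslope h 0` is holomorphic on the disk, with
`|F 0| = D_h φ (a)` and `|F (T_a w)| = ρ(φ w, φ a) / ρ(w, a)`. As `φ` is not an automorphism,
equality never holds in the Schwarz lemma for `h`, so `F` maps the disk into itself. Schwarz–Pick
for `F`, combined with `ρ(|A|, |B|) ≤ ρ(A, B)`, gives
`k(ρ(φ w, φ a) / ρ(w, a), D_h φ (a)) ≤ k(w, a)`. Applying this at `a = z` and at `a = w` and using
the triangle inequality for `k(x, y) = 2 |artanh x - artanh y|` on `[0, 1)` yields the factor `2`.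
-/

open scoped ComplexConjugate

noncomputable def mobius (a z : ℂ) : ℂ := (z - a) / (1 - conj a * z)

lemma pdist_eq_norm_mobius (z w : ℂ) : pdist z w = ‖mobius w z‖ := rfl

lemma one_sub_conj_mul_ne_zero {a z : ℂ} (ha : ‖a‖ < 1) (hz : ‖z‖ < 1) :
    1 - conj a * z ≠ 0 := by
  intro h
  have hlt : ‖conj a * z‖ < 1 := by
    rw [norm_mul, Complex.norm_conj]
    exact mul_lt_one_of_nonneg_of_lt_one_left (norm_nonneg a) ha hz.le
  simp [← sub_eq_zero.mp h] at hlt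

lemma sq_norm_one_sub_conj_mul_sub_sq_norm_sub (a z : ℂ) :
    ‖1 - conj a * z‖ ^ 2 - ‖z - a‖ ^ 2 = (1 - ‖a‖ ^ 2) * (1 - ‖z‖ ^ 2) := by
  simp only [Complex.sq_norm, Complex.normSq_apply, Complex.sub_re, Complex.sub_im,
    Complex.mul_re, Complex.mul_im, Complex.one_re, Complex.one_im, Complex.conj_re,
    Complex.conj_im]
  ring

lemma one_sub_pdist_sq {z w : ℂ} (h : 1 - conj w * z ≠ 0) :
    1 - pdist z w ^ 2 = (1 - ‖z‖ ^ 2) * (1 - ‖w‖ ^ 2) / ‖1 - conj w * z‖ ^ 2 := by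
  have hpos : 0 < ‖1 - conj w * z‖ ^ 2 := by positivity
  rw [pdist, norm_div, div_pow, eq_div_iff hpos.ne', sub_mul, one_mul,
    div_mul_cancel₀ _ hpos.ne', sq_norm_one_sub_conj_mul_sub_sq_norm_sub, mul_comm]

lemma pdist_nonneg (z w : ℂ) : 0 ≤ pdist z w := norm_nonneg _

lemma pdist_lt_one {z w : ℂ} (hz : ‖z‖ < 1) (hw : ‖w‖ < 1) : pdist z w < 1 := by
  have hsq : 0 < 1 - pdist z w ^ 2 := by
    rw [one_sub_pdist_sq (one_sub_conj_mul_ne_zero hw hz)]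
    exact div_pos (mul_pos (sub_pos.2 (pow_lt_one₀ (norm_nonneg z) hz two_ne_zero))
      (sub_pos.2 (pow_lt_one₀ (norm_nonneg w) hw two_ne_zero)))
      (pow_pos (norm_pos_iff.2 (one_sub_conj_mul_ne_zero hw hz)) 2)
  exact (pow_lt_one_iff_of_nonneg (pdist_nonneg z w) two_ne_zero).1 (sub_pos.1 hsq)

lemma pdist_symm (z w : ℂ) : pdist z w = pdist w z := by
  rw [pdist, pdist, norm_div, norm_div, norm_sub_rev z w, ← Complex.norm_conj (1 - conj z * w)]
  simp [mul_comm]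

lemma pdist_zero_right (z : ℂ) : pdist z 0 = ‖z‖ := by simp [pdist]

lemma norm_mobius_lt_one {a z : ℂ} (ha : ‖a‖ < 1) (hz : ‖z‖ < 1) : ‖mobius a z‖ < 1 :=
  pdist_eq_norm_mobius z a ▸ pdist_lt_one hz ha

lemma mapsTo_mobius {a : ℂ} (ha : ‖a‖ < 1) : MapsTo (mobius a) (ball 0 1) (ball 0 1) :=
  fun _ hz ↦ mem_ball_zero_iff.2 (norm_mobius_lt_one ha (mem_ball_zero_iff.1 hz))

lemma mobius_self (a : ℂ) : mobius a a = 0 := by simp [mobius]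

lemma mobius_neg_zero (a : ℂ) : mobius (-a) 0 = a := by simp [mobius]

lemma mobius_neg_mobius {a z : ℂ} (ha : ‖a‖ < 1) (hz : ‖z‖ < 1) :
    mobius (-a) (mobius a z) = z := by
  have hD := one_sub_conj_mul_ne_zero ha hz
  have hden : 1 - conj a * z + conj a * (z - a) ≠ 0 := by
    simpa [mul_sub] using one_sub_conj_mul_ne_zero ha ha
  simp only [mobius, map_neg, neg_mul, sub_neg_eq_add]
  rw [div_add' _ _ _ hD, mul_div_assoc', one_add_div hD, div_div_div_cancel_right₀ hD,
    div_eq_iff hden]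
  ring

lemma mobius_mobius_neg {a z : ℂ} (ha : ‖a‖ < 1) (hz : ‖z‖ < 1) :
    mobius a (mobius (-a) z) = z := by
  simpa using mobius_neg_mobius (a := -a) (by rwa [norm_neg]) hz

lemma hasDerivAt_mobius (a : ℂ) {z : ℂ} (h : 1 - conj a * z ≠ 0) :
    HasDerivAt (mobius a) ((1 - conj a * a) / (1 - conj a * z) ^ 2) z := by
  have hden : HasDerivAt (fun z ↦ 1 - conj a * z) (-conj a) z := by
    simpa using ((hasDerivAt_id z).const_mul (conj a)).const_sub 1
  exact (((hasDerivAt_id z).sub_const a).div hden h).congr_deriv (by simp only [id]; ring)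

lemma differentiableOn_mobius {a : ℂ} (ha : ‖a‖ < 1) :
    DifferentiableOn ℂ (mobius a) (ball 0 1) := fun _ hz ↦
  (hasDerivAt_mobius a (one_sub_conj_mul_ne_zero ha (mem_ball_zero_iff.1 hz)))
    |>.differentiableAt.differentiableWithinAt

lemma hdist_symm (z w : ℂ) : hdist z w = hdist w z := by rw [hdist, hdist, pdist_symm]

lemma hdist_le_hdist {z w z' w' : ℂ} (h : pdist z w ≤ pdist z' w') (h' : pdist z' w' < 1) :
    hdist z w ≤ hdist z' w' := by
  have hp := pdist_nonneg z w
  exact Real.log_le_log (div_pos (by linarith) (by linarith))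
    (Real.strictMonoOn_one_add_div_one_sub.monotoneOn ⟨by linarith, by linarith⟩
      ⟨by linarith, h'⟩ h)

lemma hdist_mobius_zero (a z : ℂ) : hdist (mobius a z) 0 = hdist z a := by
  rw [hdist, hdist, pdist_zero_right, pdist_eq_norm_mobius z a]

lemma pdist_norm_le {A B : ℂ} (hA : ‖A‖ < 1) (hB : ‖B‖ < 1) : pdist ‖A‖ ‖B‖ ≤ pdist A B := by
  have hpos : 0 < 1 - ‖B‖ * ‖A‖ :=
    sub_pos.2 (mul_lt_one_of_nonneg_of_lt_one_left (norm_nonneg B) hB hA.le)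
  have hreal : (1 : ℂ) - conj (‖B‖ : ℂ) * ‖A‖ = ((1 - ‖B‖ * ‖A‖ : ℝ) : ℂ) := by
    rw [Complex.conj_ofReal]
    push_cast
    ring
  have hden : 1 - ‖B‖ * ‖A‖ ≤ ‖1 - conj B * A‖ := by
    calc 1 - ‖B‖ * ‖A‖ = ‖(1 : ℂ)‖ - ‖conj B * A‖ := by simp
      _ ≤ ‖1 - conj B * A‖ := norm_sub_norm_le _ _
  have hsq : 1 - pdist A B ^ 2 ≤ 1 - pdist ‖A‖ ‖B‖ ^ 2 := by
    rw [one_sub_pdist_sq (one_sub_conj_mul_ne_zero hB hA),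
      one_sub_pdist_sq (hreal ▸ Complex.ofReal_ne_zero.2 hpos.ne'), hreal,
      Complex.norm_of_nonneg hpos.le, Complex.norm_of_nonneg (norm_nonneg A),
      Complex.norm_of_nonneg (norm_nonneg B)]
    have := sub_pos.2 (pow_lt_one₀ (norm_nonneg A) hA two_ne_zero)
    have := sub_pos.2 (pow_lt_one₀ (norm_nonneg B) hB two_ne_zero)
    gcongr
  exact (pow_le_pow_iff_left₀ (pdist_nonneg _ _) (pdist_nonneg _ _) two_ne_zero).1 (by linarith)

lemma hdist_ofReal {x y : ℝ} (hx : x ∈ Ico 0 1) (hy : y ∈ Ico 0 1) :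
    hdist x y = 2 * |Real.artanh x - Real.artanh y| := by
  wlog hyx : y ≤ x generalizing x y
  · rw [hdist_symm, this hy hx (le_of_not_ge hyx), abs_sub_comm]
  obtain ⟨hx0, hx1⟩ := hx
  obtain ⟨hy0, hy1⟩ := hy
  have hd : 0 < 1 - y * x := by nlinarith
  have hp : pdist x y = (x - y) / (1 - y * x) := by
    rw [pdist, Complex.conj_ofReal, ← Complex.ofReal_one, ← Complex.ofReal_mul,
      ← Complex.ofReal_sub, ← Complex.ofReal_sub, ← Complex.ofReal_div,
      Complex.norm_of_nonneg (div_nonneg (by linarith) hd.le)]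
  have hratio : (1 + pdist x y) / (1 - pdist x y) = (1 + x) / (1 - x) / ((1 + y) / (1 - y)) := by
    have hnum : 0 < 1 - y * x - (x - y) := by nlinarith
    rw [hp, one_add_div hd.ne', one_sub_div hd.ne', div_div_div_cancel_right₀ hd.ne',
      div_div_div_eq, div_eq_div_iff hnum.ne' (by nlinarith)]
    ring
  rw [abs_of_nonneg (sub_nonneg.2 (Real.artanh_le_artanh (by linarith) hx1 hyx)),
    Real.artanh_eq_half_log ⟨by linarith, hx1.le⟩, Real.artanh_eq_half_log ⟨by linarith, hy1.le⟩,
    hdist, hratio, Real.log_div (by positivity) (by positivity)]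
  ring

lemma hdist_ofReal_le_add {x y q : ℝ} (hx : x ∈ Ico 0 1) (hy : y ∈ Ico 0 1) (hq : q ∈ Ico 0 1) :
    hdist x y ≤ hdist x q + hdist q y := by
  rw [hdist_ofReal hx hy, hdist_ofReal hx hq, hdist_ofReal hq hy]
  linarith [abs_sub_le (Real.artanh x) (Real.artanh q) (Real.artanh y)]

lemma pdist_apply_le_norm {F : ℂ → ℂ} (hF : DifferentiableOn ℂ F (ball 0 1))
    (hFmap : MapsTo F (ball 0 1) (ball 0 1)) {ζ : ℂ} (hζ : ‖ζ‖ < 1) :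
    pdist (F ζ) (F 0) ≤ ‖ζ‖ := by
  have h0 : ‖F 0‖ < 1 := mem_ball_zero_iff.1 (hFmap (mem_ball_self one_pos))
  rw [pdist_eq_norm_mobius]
  exact Complex.norm_le_norm_of_mapsTo_ball ((differentiableOn_mobius h0).comp hF hFmap)
    (((mapsTo_mobius h0).comp hFmap).mono_right ball_subset_closedBall) (mobius_self _) hζ

lemma hdist_norm_apply_le {F : ℂ → ℂ} (hF : DifferentiableOn ℂ F (ball 0 1))
    (hFmap : MapsTo F (ball 0 1) (ball 0 1)) {ζ : ℂ} (hζ : ‖ζ‖ < 1) :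
    hdist ‖F ζ‖ ‖F 0‖ ≤ hdist ζ 0 := by
  have hFζ : ‖F ζ‖ < 1 := mem_ball_zero_iff.1 (hFmap (mem_ball_zero_iff.2 hζ))
  have hF0 : ‖F 0‖ < 1 := mem_ball_zero_iff.1 (hFmap (mem_ball_self one_pos))
  calc hdist ‖F ζ‖ ‖F 0‖ ≤ hdist (F ζ) (F 0) :=
        hdist_le_hdist (pdist_norm_le hFζ hF0) (pdist_lt_one hFζ hF0)
    _ ≤ hdist ζ 0 := hdist_le_hdist
        (by rw [pdist_zero_right]; exact pdist_apply_le_norm hF hFmap hζ)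
        (by rwa [pdist_zero_right])

noncomputable def mobiusRotation (a b C : ℂ) (u : ℂ) : ℂ := mobius (-b) (mobius a u * C)

section mobiusRotation

variable {a b C : ℂ}

lemma mapsTo_mobius_mul (ha : ‖a‖ < 1) (hC : ‖C‖ = 1) :
    MapsTo (fun u ↦ mobius a u * C) (ball 0 1) (ball 0 1) := fun u hu ↦ by
  rw [mem_ball_zero_iff, norm_mul, hC, mul_one]
  exact norm_mobius_lt_one ha (mem_ball_zero_iff.1 hu)

lemma mapsTo_mobiusRotation (ha : ‖a‖ < 1) (hb : ‖b‖ < 1) (hC : ‖C‖ = 1) :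
    MapsTo (mobiusRotation a b C) (ball 0 1) (ball 0 1) :=
  (mapsTo_mobius (by rwa [norm_neg])).comp (mapsTo_mobius_mul ha hC)

lemma differentiableOn_mobiusRotation (ha : ‖a‖ < 1) (hb : ‖b‖ < 1) (hC : ‖C‖ = 1) :
    DifferentiableOn ℂ (mobiusRotation a b C) (ball 0 1) :=
  (differentiableOn_mobius (by rwa [norm_neg])).comp ((differentiableOn_mobius ha).mul_const C)
    (mapsTo_mobius_mul ha hC)

lemma mobiusRotation_conj_mobiusRotation (ha : ‖a‖ < 1) (hb : ‖b‖ < 1) (hC : ‖C‖ = 1)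
    {u : ℂ} (hu : ‖u‖ < 1) : mobiusRotation b a (conj C) (mobiusRotation a b C u) = u := by
  have hCC : C * conj C = 1 := by
    rw [Complex.mul_conj, Complex.normSq_eq_norm_sq, hC]
    norm_num
  simp only [mobiusRotation]
  rw [mobius_mobius_neg hb (mem_ball_zero_iff.1 (mapsTo_mobius_mul ha hC
    (mem_ball_zero_iff.2 hu))), mul_assoc, hCC, mul_one, mobius_neg_mobius ha hu]

lemma isDiskAut_of_eqOn_mobiusRotation {φ : ℂ → ℂ} (ha : ‖a‖ < 1) (hb : ‖b‖ < 1)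
    (hC : ‖C‖ = 1) (h : EqOn φ (mobiusRotation a b C) (ball 0 1)) : IsDiskAut φ := by
  have hC' : ‖conj C‖ = 1 := by rwa [Complex.norm_conj]
  refine ⟨mobiusRotation b a (conj C), differentiableOn_mobiusRotation hb ha hC',
    mapsTo_mobiusRotation hb ha hC', fun u hu ↦ ?_, fun v hv ↦ ?_⟩
  · rw [h hu, mobiusRotation_conj_mobiusRotation ha hb hC (mem_ball_zero_iff.1 hu)]
  · rw [h (mapsTo_mobiusRotation hb ha hC' hv)]
    simpa using mobiusRotation_conj_mobiusRotation hb ha hC' (mem_ball_zero_iff.1 hv)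

end mobiusRotation

noncomputable def recentered (φ : ℂ → ℂ) (a : ℂ) : ℂ → ℂ := fun ζ ↦ mobius (φ a) (φ (mobius (-a) ζ))

section recentered

variable {φ : ℂ → ℂ} {a : ℂ}

lemma recentered_zero : recentered φ a 0 = 0 := by
  simp only [recentered, mobius_neg_zero, mobius_self]

lemma recentered_mobius (ha : ‖a‖ < 1) {w : ℂ} (hw : ‖w‖ < 1) :
    recentered φ a (mobius a w) = mobius (φ a) (φ w) := by
  simp only [recentered, mobius_neg_mobius ha hw]

lemma mapsTo_recentered (hmap : MapsTo φ (ball 0 1) (ball 0 1)) (ha : a ∈ ball 0 1) :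
    MapsTo (recentered φ a) (ball 0 1) (ball 0 1) :=
  (mapsTo_mobius (mem_ball_zero_iff.1 (hmap ha))).comp
    (hmap.comp (mapsTo_mobius (by rwa [norm_neg, ← mem_ball_zero_iff])))

lemma differentiableOn_recentered (hφ : DifferentiableOn ℂ φ (ball 0 1))
    (hmap : MapsTo φ (ball 0 1) (ball 0 1)) (ha : a ∈ ball 0 1) :
    DifferentiableOn ℂ (recentered φ a) (ball 0 1) := by
  have ha' : ‖-a‖ < 1 := by rwa [norm_neg, ← mem_ball_zero_iff]
  exact (differentiableOn_mobius (mem_ball_zero_iff.1 (hmap ha))).comp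
    (hφ.comp (differentiableOn_mobius ha') (mapsTo_mobius ha')) (hmap.comp (mapsTo_mobius ha'))

lemma norm_deriv_recentered_zero (hφ : DifferentiableOn ℂ φ (ball 0 1))
    (hmap : MapsTo φ (ball 0 1) (ball 0 1)) (ha : a ∈ ball 0 1) :
    ‖deriv (recentered φ a) 0‖ = Dh φ a := by
  have hb : ‖φ a‖ < 1 := mem_ball_zero_iff.1 (hmap ha)
  have hinner : HasDerivAt (mobius (-a)) (1 - conj a * a) 0 := by
    simpa using hasDerivAt_mobius (-a) (z := 0) (by simp)
  have hφa : HasDerivAt φ (deriv φ a) a :=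
    (hφ.differentiableAt (isOpen_ball.mem_nhds ha)).hasDerivAt
  have houter := hasDerivAt_mobius (φ a) (one_sub_conj_mul_ne_zero hb hb)
  have hcomp : HasDerivAt (recentered φ a) _ 0 :=
    houter.comp_of_eq 0 (hφa.comp_of_eq 0 hinner (mobius_neg_zero a).symm)
      (by simp [mobius_neg_zero])
  have hnorm : ∀ {c : ℂ}, ‖c‖ < 1 → ‖1 - conj c * c‖ = 1 - ‖c‖ ^ 2 := fun hc ↦ by
    rw [Complex.conj_mul', ← Complex.ofReal_pow, ← Complex.ofReal_one, ← Complex.ofReal_sub,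
      Complex.norm_of_nonneg (sub_nonneg.2 (pow_le_one₀ (norm_nonneg _) hc.le))]
  have hb' : 1 - ‖φ a‖ ^ 2 ≠ 0 := (sub_pos.2 (pow_lt_one₀ (norm_nonneg _) hb two_ne_zero)).ne'
  rw [hcomp.deriv, norm_mul, norm_mul, norm_div, norm_pow, hnorm hb, hnorm (mem_ball_zero_iff.1 ha),
    Dh]
  field_simp

lemma norm_dslope_recentered_zero (hφ : DifferentiableOn ℂ φ (ball 0 1))
    (hmap : MapsTo φ (ball 0 1) (ball 0 1)) (ha : a ∈ ball 0 1) :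
    ‖dslope (recentered φ a) 0 0‖ = Dh φ a := by
  rw [dslope_same, norm_deriv_recentered_zero hφ hmap ha]

lemma norm_dslope_recentered_mobius (ha : a ∈ ball 0 1) {w : ℂ} (hw : w ∈ ball 0 1)
    (hne : w ≠ a) :
    ‖dslope (recentered φ a) 0 (mobius a w)‖ = pdist (φ w) (φ a) / pdist w a := by
  rw [mem_ball_zero_iff] at ha hw
  have hζ : mobius a w ≠ 0 := div_ne_zero (sub_ne_zero.2 hne) (one_sub_conj_mul_ne_zero ha hw)
  rw [dslope_of_ne _ hζ, slope_def_field, recentered_zero, recentered_mobius ha hw, sub_zero,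
    sub_zero, norm_div, pdist_eq_norm_mobius, pdist_eq_norm_mobius]

/-- Equality in the Schwarz lemma for `recentered φ a` makes `φ` a Möbius map. -/
lemma norm_dslope_recentered_lt_one (hφ : DifferentiableOn ℂ φ (ball 0 1))
    (hmap : MapsTo φ (ball 0 1) (ball 0 1)) (haut : ¬ IsDiskAut φ) (ha : a ∈ ball 0 1)
    {ζ : ℂ} (hζ : ζ ∈ ball 0 1) : ‖dslope (recentered φ a) 0 ζ‖ < 1 := by
  have hd := differentiableOn_recentered hφ hmap ha
  have hm : MapsTo (recentered φ a) (ball 0 1) (closedBall (recentered φ a 0) 1) := by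
    rw [recentered_zero]
    exact (mapsTo_recentered hmap ha).mono_right ball_subset_closedBall
  have hle : ‖dslope (recentered φ a) 0 ζ‖ ≤ 1 := by
    simpa using Complex.norm_dslope_le_div_of_mapsTo_ball hd hm hζ
  refine hle.lt_of_ne fun heq ↦ haut ?_
  have haff := Complex.affine_of_mapsTo_ball_of_norm_dslope_eq_div hd hm hζ (by rw [heq, div_one])
  have ha' := mem_ball_zero_iff.1 ha
  have hb := mem_ball_zero_iff.1 (hmap ha)
  refine isDiskAut_of_eqOn_mobiusRotation ha' hb heq fun u hu ↦ ?_
  have hu' := mem_ball_zero_iff.1 hu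
  have hrot := haff (mapsTo_mobius ha' hu)
  simp only [recentered_mobius ha' hu', recentered_zero, zero_add, sub_zero, smul_eq_mul] at hrot
  rw [mobiusRotation, ← hrot, mobius_neg_mobius hb (mem_ball_zero_iff.1 (hmap hu))]

lemma Dh_mem_Ico (hφ : DifferentiableOn ℂ φ (ball 0 1)) (hmap : MapsTo φ (ball 0 1) (ball 0 1))
    (haut : ¬ IsDiskAut φ) (ha : a ∈ ball 0 1) : Dh φ a ∈ Ico 0 1 := by
  rw [← norm_dslope_recentered_zero hφ hmap ha]
  exact ⟨norm_nonneg _, norm_dslope_recentered_lt_one hφ hmap haut ha (mem_ball_self one_pos)⟩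

lemma pdist_div_pdist_mem_Ico (hφ : DifferentiableOn ℂ φ (ball 0 1))
    (hmap : MapsTo φ (ball 0 1) (ball 0 1)) (haut : ¬ IsDiskAut φ) (ha : a ∈ ball 0 1)
    {w : ℂ} (hw : w ∈ ball 0 1) (hne : w ≠ a) : pdist (φ w) (φ a) / pdist w a ∈ Ico 0 1 := by
  rw [← norm_dslope_recentered_mobius ha hw hne]
  exact ⟨norm_nonneg _, norm_dslope_recentered_lt_one hφ hmap haut ha
    (mapsTo_mobius (mem_ball_zero_iff.1 ha) hw)⟩

lemma hdist_pdist_div_pdist_Dh_le (hφ : DifferentiableOn ℂ φ (ball 0 1))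
    (hmap : MapsTo φ (ball 0 1) (ball 0 1)) (haut : ¬ IsDiskAut φ) (ha : a ∈ ball 0 1)
    {w : ℂ} (hw : w ∈ ball 0 1) (hne : w ≠ a) :
    hdist ↑(pdist (φ w) (φ a) / pdist w a) ↑(Dh φ a) ≤ hdist w a := by
  have hF := hdist_norm_apply_le
    ((Complex.differentiableOn_dslope (isOpen_ball.mem_nhds (mem_ball_self one_pos))).2
      (differentiableOn_recentered hφ hmap ha))
    (fun ζ hζ ↦ mem_ball_zero_iff.2 (norm_dslope_recentered_lt_one hφ hmap haut ha hζ))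
    (norm_mobius_lt_one (mem_ball_zero_iff.1 ha) (mem_ball_zero_iff.1 hw))
  rwa [norm_dslope_recentered_mobius ha hw hne, norm_dslope_recentered_zero hφ hmap ha,
    hdist_mobius_zero] at hF

end recentered

theorem beardon_minda_distortion (φ : ℂ → ℂ)
    (hφ : DifferentiableOn ℂ φ (ball (0:ℂ) 1))
    (hmap : MapsTo φ (ball (0:ℂ) 1) (ball (0:ℂ) 1))
    (haut : ¬ IsDiskAut φ) :
    ∀ z ∈ ball (0:ℂ) 1, ∀ w ∈ ball (0:ℂ) 1,
      hdist ((Dh φ z : ℝ) : ℂ) ((Dh φ w : ℝ) : ℂ) ≤ 2 * hdist z w := by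
  intro z hz w hw
  rcases eq_or_ne w z with rfl | hne
  · simp [hdist, pdist]
  set q := pdist (φ w) (φ z) / pdist w z
  have hzq := hdist_pdist_div_pdist_Dh_le hφ hmap haut hz hw hne
  have hwq := hdist_pdist_div_pdist_Dh_le hφ hmap haut hw hz hne.symm
  rw [pdist_symm (φ z), pdist_symm z] at hwq
  calc hdist (Dh φ z) (Dh φ w) ≤ hdist (Dh φ z) q + hdist q (Dh φ w) :=
        hdist_ofReal_le_add (Dh_mem_Ico hφ hmap haut hz) (Dh_mem_Ico hφ hmap haut hw)
          (pdist_div_pdist_mem_Ico hφ hmap haut hz hw hne)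
    _ = hdist q (Dh φ z) + hdist q (Dh φ w) := by rw [hdist_symm (Dh φ z)]
    _ ≤ hdist w z + hdist z w := add_le_add hzq hwq
    _ = 2 * hdist z w := by rw [hdist_symm w]; ring
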